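/- arXiv:2002.00304 — 3 statements merged into one kernel-verified Lean document; each statement's English description precedes it below -/
import Mathlib

section
/- Let R be a unital alternative ring with nontrivial idempotent e₁ and e₂ = 1 − e₁, k-torsion free for every k ∈ {2, 3, n−1, n−3} with k ≥ 1, satisfying conditions (1), (2), (3) and (4), and let D : R → R be a multiplicative Lie n-derivation (n ≥ 2). Then the diagonal Peirce part of D(e₁) is central: (e₁*D(e₁))*e₁ + (e₂*D(e₁))*e₂ ∈ Z(R). -/
/-- The commutative center of a (possibly non-associative, non-unital) ring. -/
def rctr (R : Type*) [NonUnitalNonAssocRing R] : Set R := {z | ∀ x, z * x = x * z}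

/-- `R` is an alternative ring. -/
def IsAlt (R : Type*) [NonUnitalNonAssocRing R] : Prop :=
  ∀ x y : R, (x * x) * y = x * (x * y) ∧ (y * x) * x = y * (x * x)

/-- Peirce components relative to an idempotent `e`. -/
def P11 {R : Type*} [NonUnitalNonAssocRing R] (e : R) : Set R := {x | e * x = x ∧ x * e = x}
def P12 {R : Type*} [NonUnitalNonAssocRing R] (e : R) : Set R := {x | e * x = x ∧ x * e = 0}
def P21 {R : Type*} [NonUnitalNonAssocRing R] (e : R) : Set R := {x | e * x = 0 ∧ x * e = x}
def P22 {R : Type*} [NonUnitalNonAssocRing R] (e : R) : Set R := {x | e * x = 0 ∧ x * e = 0}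

/-- The iterated commutator `p_n`: `p_1(x) = x`,
`p_n(x_1,…,x_n) = [p_{n-1}(x_1,…,x_{n-1}), x_n]`. -/
def pn {R : Type*} [NonUnitalNonAssocRing R] : (n : ℕ) → (Fin n → R) → R
  | 0, _ => 0
  | 1, x => x 0
  | (m+2), x =>
      pn (m+1) (fun i => x i.castSucc) * x (Fin.last (m+1))
        - x (Fin.last (m+1)) * pn (m+1) (fun i => x i.castSucc)

/-- A (not necessarily additive) map `D` is a multiplicative Lie `n`-derivation. -/
def IsMultLieNDeriv {R : Type*} [NonUnitalNonAssocRing R] (n : ℕ) (D : R → R) : Prop :=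
  ∀ x : Fin n → R, D (pn n x) = ∑ i : Fin n, pn n (Function.update x i (D (x i)))

/-!
Write `f = 1 - e` and `P` for the projection of `R` onto the Peirce space `R₁₂`; the element in
question is `b₁₁ + b₂₂`, the diagonal part of `b = D e`. For `x ∈ R₁₂` the iterated commutators
`p_n(e, x, f, …, f)`, `p_n(f, x, e, …, e)` and `p_n(x, e, e, …, e)` are `x`, `±x` and `±x`, and
projecting the derivation rule for them to `R₁₂` gives `P[x, D e] = (n - 2) • P[x, D f]` and
`P[x, D f] = -P[x, D e]`. Hence `(n - 1) • P[x, D e] = 0`, and `P[x, D e] = x b₂₂ - b₁₁ x`, so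
`b₁₁ x = x b₂₂` on `R₁₂`; the same argument for the idempotent `f` gives `b₂₂ y = y b₁₁` on `R₂₁`.
These identities make `b₁₁ + b₂₂` commute with `R₁₂` and `R₂₁`, and, through the faithfulness
conditions (2) and (3), with `R₁₁` and `R₂₂`.
-/

section

variable {R : Type*} [NonAssocRing R] {e x y u s : R}

namespace IsAlt

lemma associator_self_left (halt : IsAlt R) (x y : R) : associator x x y = 0 := by
  rw [associator_apply, (halt x y).1, sub_self]

lemma associator_self_right (halt : IsAlt R) (x y : R) : associator x y y = 0 := by
  rw [associator_apply, (halt y x).2, sub_self]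

lemma associator_swap_left (halt : IsAlt R) (x y z : R) :
    associator y x z = -associator x y z := by
  have h : associator (x + y) (x + y) z =
      associator x x z + associator x y z + associator y x z + associator y y z := by
    simp only [associator_apply, add_mul, mul_add]; abel
  simp only [halt.associator_self_left, zero_add, add_zero] at h
  exact eq_neg_of_add_eq_zero_right h.symm

lemma associator_swap_right (halt : IsAlt R) (x y z : R) :
    associator x z y = -associator x y z := by
  have h : associator x (y + z) (y + z) =
      associator x y y + associator x y z + associator x z y + associator x z z := by
    simp only [associator_apply, add_mul, mul_add]; abel
  simp only [halt.associator_self_right, zero_add, add_zero] at h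
  exact eq_neg_of_add_eq_zero_right h.symm

lemma associator_cycle (halt : IsAlt R) (x y z : R) :
    associator x y z = associator z x y := by
  rw [halt.associator_swap_left x z y, halt.associator_swap_right x y z, neg_neg]

lemma flexible (halt : IsAlt R) (x y : R) : x * y * x = x * (y * x) := by
  rw [← sub_eq_zero, ← associator_apply, halt.associator_swap_right, halt.associator_self_left,
    neg_zero]

lemma mul_mul_eq_left (halt : IsAlt R) (e x y : R) :
    e * (x * y) = e * x * y + x * e * y - x * (e * y) := by
  have h := halt.associator_swap_left x e y
  rw [associator_apply, associator_apply] at h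
  rw [← sub_eq_zero, ← neg_eq_zero, ← sub_eq_zero.mpr h]; abel

lemma mul_mul_eq_right (halt : IsAlt R) (x y e : R) :
    x * y * e = x * (y * e) + x * (e * y) - x * e * y := by
  have h := halt.associator_swap_right x e y
  rw [associator_apply, associator_apply] at h
  rw [← sub_eq_zero, ← sub_eq_zero.mpr h]; abel

lemma mul_mul_eq_middle (halt : IsAlt R) (x e y : R) :
    x * e * y - x * (e * y) = y * (e * x) - y * e * x := by
  have h : associator y e x = -associator x e y := by
    rw [halt.associator_swap_left e y x, halt.associator_swap_right e x y,
      halt.associator_swap_left x e y, neg_neg]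
  rw [associator_apply, associator_apply] at h
  rw [← neg_neg (x * e * y - _), ← h]; abel

lemma idem_mul_idem_mul (halt : IsAlt R) {e : R} (he : IsIdempotentElem e) (y : R) :
    e * (e * y) = e * y := by
  rw [← (halt e y).1, he.eq]

lemma mul_idem_mul_idem (halt : IsAlt R) {e : R} (he : IsIdempotentElem e) (y : R) :
    y * e * e = y * e := by
  rw [(halt e y).2, he.eq]

lemma P12_mul_P11_eq_zero (halt : IsAlt R) (hx : x ∈ P12 e) (hu : u ∈ P11 e) : x * u = 0 := by
  have h := halt.mul_mul_eq_middle x e u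
  simpa [hx.1, hx.2, hu.1, hu.2] using h

lemma P22_mul_P12_eq_zero (halt : IsAlt R) (hs : s ∈ P22 e) (hx : x ∈ P12 e) : s * x = 0 := by
  have h := halt.mul_mul_eq_middle s e x
  simpa [hs.1, hs.2, hx.1, hx.2] using h

lemma P11_mul_P11_mem (halt : IsAlt R) (hu : u ∈ P11 e) (hy : y ∈ P11 e) : u * y ∈ P11 e := by
  constructor
  · rw [halt.mul_mul_eq_left, hu.1, hu.2, hy.1, add_sub_cancel_right]
  · rw [halt.mul_mul_eq_right, hy.2, hy.1, hu.2, add_sub_cancel_right]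

lemma P11_mul_P12_mem (halt : IsAlt R) (hu : u ∈ P11 e) (hy : y ∈ P12 e) : u * y ∈ P12 e := by
  constructor
  · rw [halt.mul_mul_eq_left, hu.1, hu.2, hy.1, add_sub_cancel_right]
  · rw [halt.mul_mul_eq_right, hy.2, hy.1, hu.2, mul_zero, zero_add, sub_self]

lemma P12_mul_P12_mem (halt : IsAlt R) (hx : x ∈ P12 e) (hy : y ∈ P12 e) : x * y ∈ P21 e := by
  constructor
  · rw [halt.mul_mul_eq_left, hx.1, hx.2, hy.1, zero_mul, add_zero, sub_self]
  · rw [halt.mul_mul_eq_right, hy.2, hy.1, hx.2, mul_zero, zero_mul, zero_add, sub_zero]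

lemma P12_mul_P21_mem (halt : IsAlt R) (hx : x ∈ P12 e) (hy : y ∈ P21 e) : x * y ∈ P11 e := by
  constructor
  · rw [halt.mul_mul_eq_left, hx.1, hx.2, hy.1, zero_mul, mul_zero, add_zero, sub_zero]
  · rw [halt.mul_mul_eq_right, hy.2, hy.1, hx.2, mul_zero, zero_mul, add_zero, sub_zero]

lemma P21_mul_P12_mem (halt : IsAlt R) (hx : x ∈ P21 e) (hy : y ∈ P12 e) : x * y ∈ P22 e := by
  constructor
  · rw [halt.mul_mul_eq_left, hx.1, hx.2, hy.1, zero_mul, zero_add, sub_self]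
  · rw [halt.mul_mul_eq_right, hy.2, hy.1, hx.2, mul_zero, zero_add, sub_self]

lemma P12_mul_P22_mem (halt : IsAlt R) (hx : x ∈ P12 e) (hs : s ∈ P22 e) : x * s ∈ P12 e := by
  constructor
  · rw [halt.mul_mul_eq_left, hx.1, hx.2, hs.1, zero_mul, mul_zero, add_zero, sub_zero]
  · rw [halt.mul_mul_eq_right, hs.2, hs.1, hx.2, mul_zero, zero_mul, add_zero, sub_zero]

lemma P22_mul_P11_eq_zero (halt : IsAlt R) (htor : ∀ z : R, 2 • z = 0 → z = 0)
    (he : IsIdempotentElem e) (hs : s ∈ P22 e) (hu : u ∈ P11 e) : s * u = 0 ∧ u * s = 0 := by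
  have hsu : u * s = s * u := by
    have h := halt.mul_mul_eq_middle s e u
    rwa [hs.1, hs.2, hu.1, hu.2, zero_mul, mul_zero, zero_sub, zero_sub, neg_inj, eq_comm] at h
  have hleft : e * (s * u) = -(s * u) := by
    rw [halt.mul_mul_eq_left, hs.1, hs.2, hu.1, zero_mul, zero_add, zero_sub]
  have h2 : 2 • (s * u) = 0 := by
    have h := halt.idem_mul_idem_mul he (s * u)
    rw [hleft, mul_neg, hleft, neg_neg, eq_neg_iff_add_eq_zero] at h
    rwa [two_nsmul]
  have hzero := htor _ h2
  exact ⟨hzero, hsu.trans hzero⟩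

lemma associator_P11_P11_P12 (halt : IsAlt R) {v : R} (hu : u ∈ P11 e) (hv : v ∈ P11 e)
    (hy : y ∈ P12 e) : u * v * y = u * (v * y) := by
  rw [← sub_eq_zero, ← associator_apply, halt.associator_cycle, associator_apply,
    halt.P12_mul_P11_eq_zero hy hu, halt.P12_mul_P11_eq_zero hy (halt.P11_mul_P11_mem hu hv),
    zero_mul, sub_zero]

lemma associator_P11_P12_P22 (halt : IsAlt R) (htor : ∀ z : R, 2 • z = 0 → z = 0)
    (he : IsIdempotentElem e) (hu : u ∈ P11 e) (hy : y ∈ P12 e) (hs : s ∈ P22 e) :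
    u * y * s = u * (y * s) := by
  rw [← sub_eq_zero, ← associator_apply, halt.associator_cycle, associator_apply,
    (halt.P22_mul_P11_eq_zero htor he hs hu).1, halt.P22_mul_P12_eq_zero hs
      (halt.P11_mul_P12_mem hu hy), zero_mul, sub_zero]

end IsAlt

def adRight (c : R) : R →+ R := AddMonoidHom.mulRight c - AddMonoidHom.mulLeft c

lemma adRight_apply (c y : R) : adRight c y = y * c - c * y := rfl

lemma adRight_swap (c y : R) : adRight c y = -adRight y c := (neg_sub _ _).symm

def peirce11 (e y : R) : R := e * (y * e)

def peirce12 (e : R) : R →+ R :=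
  AddMonoidHom.mk' (fun y => e * y - e * (y * e)) fun a b => by
    simp only [mul_add, add_mul]; abel

lemma peirce12_apply (e y : R) : peirce12 e y = e * y - e * (y * e) := rfl

lemma peirce_decomposition (e y : R) :
    peirce11 e y + peirce12 e y + peirce12 (1 - e) y + peirce11 (1 - e) y = y := by
  simp only [peirce11, peirce12_apply, mul_sub, sub_mul, one_mul, mul_one]; abel

lemma P11_one_sub (e : R) : P11 (1 - e) = P22 e := by
  ext x; simp [P11, P22, sub_mul, mul_sub]

lemma P12_one_sub (e : R) : P12 (1 - e) = P21 e := by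
  ext x
  simp only [P12, P21, Set.mem_ofPred_eq, sub_mul, mul_sub, one_mul, mul_one, sub_eq_self,
    sub_eq_zero, eq_comm (a := x) (b := x * e)]

lemma peirce12_of_mem_P12 (hx : x ∈ P12 e) : peirce12 e x = x := by
  rw [peirce12_apply, hx.1, hx.2, mul_zero, sub_zero]

lemma peirce12_eq_zero_of_mul_eq_self (hx : x * e = x) : peirce12 e x = 0 := by
  rw [peirce12_apply, hx, sub_self]

lemma peirce12_eq_zero_of_mem_P22 (hx : x ∈ P22 e) : peirce12 e x = 0 := by
  rw [peirce12_apply, hx.1, hx.2, mul_zero, sub_zero]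

namespace IsAlt

lemma peirce11_mem (halt : IsAlt R) (he : IsIdempotentElem e) (y : R) :
    peirce11 e y ∈ P11 e :=
  ⟨halt.idem_mul_idem_mul he _, by
    rw [peirce11, ← halt.flexible, halt.mul_idem_mul_idem he]⟩

lemma peirce12_mem (halt : IsAlt R) (he : IsIdempotentElem e) (y : R) :
    peirce12 e y ∈ P12 e := by
  constructor
  · rw [peirce12_apply, mul_sub, halt.idem_mul_idem_mul he, halt.idem_mul_idem_mul he]
  · have h := (halt.peirce11_mem he y).2
    rw [peirce11] at h
    rw [peirce12_apply, sub_mul, halt.flexible, h, sub_self]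

lemma peirce12_mul_idem (halt : IsAlt R) (he : IsIdempotentElem e) (y : R) :
    peirce12 e (y * e) = 0 :=
  peirce12_eq_zero_of_mul_eq_self (halt.mul_idem_mul_idem he y)

lemma peirce12_idem_mul (halt : IsAlt R) (he : IsIdempotentElem e) (y : R) :
    peirce12 e (e * y) = peirce12 e y := by
  rw [peirce12_apply, peirce12_apply, halt.idem_mul_idem_mul he, halt.flexible,
    halt.idem_mul_idem_mul he]

lemma peirce12_adRight_idem (halt : IsAlt R) (he : IsIdempotentElem e) (y : R) :
    peirce12 e (adRight e y) = -peirce12 e y := by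
  rw [adRight_apply, map_sub, halt.peirce12_mul_idem he, halt.peirce12_idem_mul he, zero_sub]

lemma peirce12_adRight_one_sub (halt : IsAlt R) (he : IsIdempotentElem e) (y : R) :
    peirce12 e (adRight (1 - e) y) = peirce12 e y := by
  have h : adRight (1 - e) y = e * y - y * e := by
    simp only [adRight_apply, mul_sub, sub_mul, one_mul, mul_one]; abel
  rw [h, map_sub, halt.peirce12_mul_idem he, halt.peirce12_idem_mul he, sub_zero]

lemma peirce12_adRight_of_mem_P12 (halt : IsAlt R) (he : IsIdempotentElem e) (hx : x ∈ P12 e)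
    (y : R) : peirce12 e (adRight y x) = x * peirce11 (1 - e) y - peirce11 e y * x := by
  have m11 := halt.peirce11_mem he y
  have m12 := halt.peirce12_mem he y
  have m21 : peirce12 (1 - e) y ∈ P21 e := P12_one_sub e ▸ halt.peirce12_mem he.one_sub y
  have m22 : peirce11 (1 - e) y ∈ P22 e := P11_one_sub e ▸ halt.peirce11_mem he.one_sub y
  have hdec := peirce_decomposition e y
  have hxy : x * y = x * peirce11 e y + x * peirce12 e y + x * peirce12 (1 - e) y
      + x * peirce11 (1 - e) y := by
    conv_lhs => rw [← hdec]
    simp only [mul_add]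
  have hyx : y * x = peirce11 e y * x + peirce12 e y * x + peirce12 (1 - e) y * x
      + peirce11 (1 - e) y * x := by
    conv_lhs => rw [← hdec]
    simp only [add_mul]
  rw [adRight_apply, map_sub, hxy, hyx]
  simp only [map_add, halt.P12_mul_P11_eq_zero hx m11, halt.P22_mul_P12_eq_zero m22 hx, map_zero,
    peirce12_eq_zero_of_mul_eq_self (halt.P12_mul_P12_mem hx m12).2,
    peirce12_eq_zero_of_mul_eq_self (halt.P12_mul_P21_mem hx m21).2,
    peirce12_of_mem_P12 (halt.P12_mul_P22_mem hx m22),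
    peirce12_of_mem_P12 (halt.P11_mul_P12_mem m11 hx),
    peirce12_eq_zero_of_mul_eq_self (halt.P12_mul_P12_mem m12 hx).2,
    peirce12_eq_zero_of_mem_P22 (halt.P21_mul_P12_mem m21 hx)]
  abel

lemma peirce12_iterate_adRight_idem (halt : IsAlt R) (he : IsIdempotentElem e) (y : R)
    (k : ℕ) : peirce12 e ((adRight e)^[k] y) = (-1 : ℤ) ^ k • peirce12 e y := by
  induction k with
  | zero => simp
  | succ k ih =>
    rw [Function.iterate_succ_apply', halt.peirce12_adRight_idem he, ih, pow_succ, mul_neg_one,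
      neg_smul]

lemma peirce12_iterate_adRight_one_sub (halt : IsAlt R) (he : IsIdempotentElem e) (y : R)
    (k : ℕ) : peirce12 e ((adRight (1 - e))^[k] y) = peirce12 e y := by
  induction k with
  | zero => rfl
  | succ k ih => rw [Function.iterate_succ_apply', halt.peirce12_adRight_one_sub he, ih]

lemma commute_of_faithful (halt : IsAlt R) (htor : ∀ z : R, 2 • z = 0 → z = 0)
    (he : IsIdempotentElem e) (hfaith : ∀ x ∈ P11 e, (∀ y ∈ P12 e, x * y = 0) → x = 0)
    {a d : R} (ha : a ∈ P11 e) (hd : d ∈ P11 (1 - e)) (had : ∀ y ∈ P12 e, a * y = y * d) :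
    (∀ u ∈ P11 e, (a + d) * u = u * (a + d)) ∧ (∀ y ∈ P12 e, (a + d) * y = y * (a + d)) := by
  rw [P11_one_sub] at hd
  refine ⟨fun u hu => ?_, fun y hy => ?_⟩
  · obtain ⟨hdu, hud⟩ := halt.P22_mul_P11_eq_zero htor he hd hu
    have hau := halt.P11_mul_P11_mem ha hu
    have hua := halt.P11_mul_P11_mem hu ha
    have hcomm : a * u - u * a = 0 := by
      refine hfaith _ ⟨by rw [mul_sub, hau.1, hua.1], by rw [sub_mul, hau.2, hua.2]⟩ fun y hy => ?_
      rw [sub_mul, halt.associator_P11_P11_P12 ha hu hy, halt.associator_P11_P11_P12 hu ha hy,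
        had y hy, had _ (halt.P11_mul_P12_mem hu hy),
        halt.associator_P11_P12_P22 htor he hu hy hd, sub_self]
    rw [add_mul, mul_add, hdu, hud, add_zero, add_zero, sub_eq_zero.mp hcomm]
  · rw [add_mul, mul_add, halt.P22_mul_P12_eq_zero hd hy, halt.P12_mul_P11_eq_zero hy ha,
      add_zero, zero_add, had y hy]

lemma mem_rctr_of_commute_peirce (halt : IsAlt R) (he : IsIdempotentElem e) {z : R}
    (h11 : ∀ u ∈ P11 e, z * u = u * z) (h12 : ∀ y ∈ P12 e, z * y = y * z)
    (h22 : ∀ u ∈ P11 (1 - e), z * u = u * z) (h21 : ∀ y ∈ P12 (1 - e), z * y = y * z) :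
    z ∈ rctr R := by
  intro y
  rw [← peirce_decomposition e y]
  simp only [mul_add, add_mul]
  rw [h11 _ (halt.peirce11_mem he y), h12 _ (halt.peirce12_mem he y),
    h21 _ (halt.peirce12_mem he.one_sub y), h22 _ (halt.peirce11_mem he.one_sub y)]

end IsAlt

lemma pn_succ_succ (m : ℕ) (x : Fin (m + 2) → R) :
    pn (m + 2) x = adRight (x (Fin.last (m + 1))) (pn (m + 1) fun i => x i.castSucc) := rfl

lemma pn_eq_iterate_of_tail {c : R} {N : ℕ} (hN : 1 ≤ N) :
    ∀ {n : ℕ} (hNn : N ≤ n) (x : Fin n → R), (∀ j : Fin n, N ≤ (j : ℕ) → x j = c) →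
      pn n x = (adRight c)^[n - N] (pn N fun i => x (Fin.castLE hNn i)) := by
  intro n
  induction n with
  | zero => intro hNn; omega
  | succ n ih =>
    intro hNn x hx
    rcases hNn.eq_or_lt with rfl | hlt
    · simp
    obtain ⟨k, rfl⟩ : ∃ k, n = k + 1 := ⟨n - 1, by omega⟩
    rw [pn_succ_succ, hx _ (by simp; omega), ih (by omega) _ (fun j hj => hx _ hj),
      show k + 2 - N = k + 1 - N + 1 by omega, Function.iterate_succ_apply']
    rfl

lemma pn_eq_iterate_adRight {c : R} {m : ℕ} (x : Fin (m + 2) → R)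
    (hx : ∀ j : Fin (m + 2), 2 ≤ (j : ℕ) → x j = c) :
    pn (m + 2) x = (adRight c)^[m] (adRight (x 1) (x 0)) := by
  rw [pn_eq_iterate_of_tail (by norm_num) (by omega) x hx, Nat.add_sub_cancel]
  rfl

lemma pn_update_eq_iterate {c : R} {m : ℕ} (x : Fin (m + 2) → R)
    (hx : ∀ j : Fin (m + 2), 2 ≤ (j : ℕ) → x j = c) (i : Fin m) (w : R) :
    pn (m + 2) (Function.update x i.succ.succ w) =
      (adRight c)^[m - 1 - i] (adRight w ((adRight c)^[i] (adRight (x 1) (x 0)))) := by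
  have hi := i.isLt
  have hne : ∀ j : Fin (m + 2), (j : ℕ) ≠ i + 2 → Function.update x i.succ.succ w j = x j :=
    fun j hj => Function.update_of_ne (fun h => hj (by simp [h])) _ _
  rw [pn_eq_iterate_of_tail (N := i + 3) (by omega) (by omega) _
      (fun j hj => (hne j (by omega)).trans (hx j (by omega))),
    show m + 2 - (i + 3) = m - 1 - i by omega, pn_succ_succ,
    pn_eq_iterate_adRight (c := c) _ (fun j hj => by
      simp only [Fin.castLE_castSucc]
      exact (hne _ (by simp; omega)).trans (hx _ (by simp; omega)))]
  congr 3
  convert Function.update_self i.succ.succ w x using 2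
  ext; simp

namespace IsMultLieNDeriv

variable {D : R → R} {m : ℕ}

lemma map_iterate_adRight (hD : IsMultLieNDeriv (m + 2) D) (a b c : R) :
    D ((adRight c)^[m] (adRight b a)) =
      (adRight c)^[m] (adRight b (D a)) + (adRight c)^[m] (adRight (D b) a) +
        ∑ i : Fin m, (adRight c)^[m - 1 - i] (adRight (D c) ((adRight c)^[i] (adRight b a))) := by
  set x : Fin (m + 2) → R := Fin.cons a (Fin.cons b fun _ => c)
  have hx : ∀ j : Fin (m + 2), 2 ≤ (j : ℕ) → x j = c := by
    intro j hj
    obtain ⟨k, rfl⟩ : ∃ k : Fin m, j = k.succ.succ :=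
      ⟨⟨j - 2, by omega⟩, Fin.ext (by simp; omega)⟩
    rfl
  have hx' : ∀ j : Fin (m + 2), (j : ℕ) < 2 → ∀ w, ∀ k : Fin (m + 2), 2 ≤ (k : ℕ) →
      Function.update x j w k = c :=
    fun j hj w k hk => (Function.update_of_ne (by rintro rfl; omega) _ _).trans (hx k hk)
  have h := hD x
  rw [pn_eq_iterate_adRight x hx, Fin.sum_univ_succ, Fin.sum_univ_succ, Fin.succ_zero_eq_one,
    pn_eq_iterate_adRight _ (hx' 0 (by simp) _), pn_eq_iterate_adRight _ (hx' 1 (by simp) _)] at h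
  simp only [pn_update_eq_iterate x hx] at h
  simpa [x, add_assoc] using h

lemma peirce12_adRight_idem_eq_nsmul (hD : IsMultLieNDeriv (m + 2) D) (halt : IsAlt R)
    (he : IsIdempotentElem e) (hx : x ∈ P12 e) :
    peirce12 e (adRight (D e) x) = m • peirce12 e (adRight (D (1 - e)) x) := by
  have hxe : adRight x e = x := by rw [adRight_apply, hx.1, hx.2, sub_zero]
  have hfix : adRight (1 - e) x = x := by
    rw [adRight_apply, mul_sub, sub_mul, hx.1, hx.2, mul_one, one_mul, sub_zero, sub_self,
      sub_zero]
  have h := congrArg (peirce12 e) (hD.map_iterate_adRight e x (1 - e))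
  simp only [hxe, Function.iterate_fixed hfix, map_add, map_sum,
    halt.peirce12_iterate_adRight_one_sub he, Finset.sum_const, Finset.card_univ,
    Fintype.card_fin] at h
  rw [adRight_swap x, adRight_swap _ e, map_neg, map_neg, halt.peirce12_adRight_idem he] at h
  rw [← sub_eq_zero] at h ⊢
  rw [← h]; abel

lemma peirce12_adRight_one_sub_eq_neg (hD : IsMultLieNDeriv (m + 2) D) (halt : IsAlt R)
    (he : IsIdempotentElem e) (hx : x ∈ P12 e) :
    peirce12 e (adRight (D (1 - e)) x) = -peirce12 e (adRight (D e) x) := by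
  have hxf : adRight x (1 - e) = -x := by
    rw [adRight_apply, mul_sub, sub_mul, hx.1, hx.2, mul_one, one_mul, sub_zero]; abel
  have hex : adRight e x = -x := by rw [adRight_apply, hx.1, hx.2, zero_sub]
  have hf := hD.map_iterate_adRight (1 - e) x e
  have hx' := hD.map_iterate_adRight x e e
  rw [hxf] at hf
  rw [hex] at hx'
  have h' := congrArg (peirce12 e) (add_right_cancel (hf.symm.trans hx'))
  simp only [map_add, halt.peirce12_iterate_adRight_idem he, ← smul_add] at h'
  have h'' := ((isUnit_neg_one (α := ℤ)).pow m).smul_left_cancel.mp h'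
  rw [adRight_swap x, adRight_swap _ (1 - e), map_neg, map_neg,
    halt.peirce12_adRight_one_sub he, halt.peirce12_adRight_idem he] at h''
  rw [← sub_eq_zero] at h'' ⊢
  rw [← neg_eq_zero, ← h'']; abel

lemma peirce11_mul_eq_mul_peirce11 (hD : IsMultLieNDeriv (m + 2) D) (halt : IsAlt R)
    (he : IsIdempotentElem e) (htor : ∀ y : R, (m + 1) • y = 0 → y = 0) (hx : x ∈ P12 e) :
    peirce11 e (D e) * x = x * peirce11 (1 - e) (D e) ∧
      peirce11 e (D (1 - e)) * x = x * peirce11 (1 - e) (D (1 - e)) := by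
  have hnsmul := hD.peirce12_adRight_idem_eq_nsmul halt he hx
  have hneg := hD.peirce12_adRight_one_sub_eq_neg halt he hx
  have hzero : peirce12 e (adRight (D e) x) = 0 := by
    refine htor _ ?_
    rw [succ_nsmul]
    nth_rewrite 2 [hnsmul]
    rw [hneg, smul_neg, add_neg_cancel]
  have hzero' : peirce12 e (adRight (D (1 - e)) x) = 0 := by rw [hneg, hzero, neg_zero]
  rw [halt.peirce12_adRight_of_mem_P12 he hx, sub_eq_zero] at hzero hzero'
  exact ⟨hzero.symm, hzero'.symm⟩

end IsMultLieNDeriv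

end

theorem stmt11_general {R : Type*} [NonAssocRing R] (halt : IsAlt R)
    (e₁ e₂ : R) (he₂ : e₂ = 1 - e₁)
    (he : e₁ * e₁ = e₁)
    (n : ℕ) (hn : 2 ≤ n)
    (htor : ∀ k ∈ ({2, 3, n - 1, n - 3} : Set ℕ), 1 ≤ k → ∀ x : R, k • x = 0 → x = 0)
    (hc2 : (∀ x ∈ P11 e₁, (∀ y ∈ P12 e₁, x * y = 0) → x = 0) ∧
           (∀ x ∈ P11 e₁, (∀ y ∈ P21 e₁, y * x = 0) → x = 0))
    (hc3 : (∀ x ∈ P22 e₁, (∀ y ∈ P12 e₁, y * x = 0) → x = 0) ∧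
           (∀ x ∈ P22 e₁, (∀ y ∈ P21 e₁, x * y = 0) → x = 0))
    (D : R → R) (hD : IsMultLieNDeriv n D)
    :
    (e₁ * D e₁) * e₁ + (e₂ * D e₁) * e₂ ∈ rctr R := by
  obtain ⟨m, rfl⟩ : ∃ m, n = m + 2 := ⟨n - 2, by omega⟩
  have htor2 : ∀ x : R, 2 • x = 0 → x = 0 := htor 2 (by simp) (by norm_num)
  have htorm : ∀ x : R, (m + 1) • x = 0 → x = 0 := htor (m + 1) (by simp) (by omega)
  have he' : IsIdempotentElem (1 - e₁) := IsIdempotentElem.one_sub he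
  set a := peirce11 e₁ (D e₁)
  set d := peirce11 (1 - e₁) (D e₁)
  have hfaith : ∀ x ∈ P11 (1 - e₁), (∀ y ∈ P12 (1 - e₁), x * y = 0) → x = 0 := by
    rw [P11_one_sub, P12_one_sub]; exact hc3.2
  have ha : a ∈ P11 (1 - (1 - e₁)) := by rw [sub_sub_cancel]; exact halt.peirce11_mem he _
  obtain ⟨h11, h12⟩ := halt.commute_of_faithful htor2 he hc2.1 (halt.peirce11_mem he _)
    (halt.peirce11_mem he' _) fun y hy => (hD.peirce11_mul_eq_mul_peirce11 halt he htorm hy).1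
  obtain ⟨h22, h21⟩ := halt.commute_of_faithful htor2 he' hfaith (halt.peirce11_mem he' _) ha
    fun y hy => by
      simpa only [sub_sub_cancel] using (hD.peirce11_mul_eq_mul_peirce11 halt he' htorm hy).2
  have hgoal : e₁ * D e₁ * e₁ + e₂ * D e₁ * e₂ = a + d := by
    rw [he₂, halt.flexible, halt.flexible]; rfl
  rw [hgoal]
  exact halt.mem_rctr_of_commute_peirce he h11 h12 (fun u hu => add_comm d a ▸ h22 u hu)
    fun y hy => add_comm d a ▸ h21 y hy

theorem stmt11 {R : Type*} [NonAssocRing R] (halt : IsAlt R)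
    (e₁ e₂ : R) (he₂ : e₂ = 1 - e₁)
    (he : e₁ * e₁ = e₁) (hne0 : e₁ ≠ 0) (hne1 : e₁ ≠ 1)
    (n : ℕ) (hn : 2 ≤ n)
    (htor : ∀ k ∈ ({2, 3, n - 1, n - 3} : Set ℕ), 1 ≤ k → ∀ x : R, k • x = 0 → x = 0)
    (hc1 : (∀ x ∈ P12 e₁, (∀ y ∈ P21 e₁, x * y = 0) → x = 0) ∧
           (∀ x ∈ P21 e₁, (∀ y ∈ P12 e₁, x * y = 0) → x = 0))
    (hc2 : (∀ x ∈ P11 e₁, (∀ y ∈ P12 e₁, x * y = 0) → x = 0) ∧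
           (∀ x ∈ P11 e₁, (∀ y ∈ P21 e₁, y * x = 0) → x = 0))
    (hc3 : (∀ x ∈ P22 e₁, (∀ y ∈ P12 e₁, y * x = 0) → x = 0) ∧
           (∀ x ∈ P22 e₁, (∀ y ∈ P21 e₁, x * y = 0) → x = 0))
    (hc4 : ∀ z ∈ rctr R, z ≠ 0 → ∀ r : R, ∃ s : R, z * s = r)
    (D : R → R) (hD : IsMultLieNDeriv n D)
    :
    (e₁ * D e₁) * e₁ + (e₂ * D e₁) * e₂ ∈ rctr R :=
  stmt11_general halt e₁ e₂ he₂ he n hn htor hc2 hc3 D hD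
end

section
/- Let R be a unital alternative ring with nontrivial idempotent e₁ and e₂ = 1 − e₁, k-torsion free for every k ∈ {2, 3, n−1, n−3} with k ≥ 1, satisfying conditions (1), (2), (3) and (4), and let D : R → R be a multiplicative Lie n-derivation (n ≥ 2) satisfying conditions (a), (b), (c) and with D(e₁) ∈ Z(R). Then for i ≠ j in {1,2}, for all a ∈ R_ii, b ∈ R_ij and any c ∈ R_ii with D(a) − c ∈ Z(R), one has D(a*b) = c*b + a*D(b). -/
/-!
Let `e ∈ {e₁, e₂}` and `t = 1 - e`. The map `⁅·, t⁆` is the identity on `R₁₂(e)`, and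
`⁅a, b⁆ = a * b` for `a ∈ R₁₁(e)`, `b ∈ R₁₂(e)`. Hence `p_n(a, b, t, …, t) = p_n(x, y, t, …, t)`
for `(x, y) = (e₁, a * b)` if `e = e₁`, and `(x, y) = (a * b, e₁)` if `e = e₂`. Applying `D`, the
summands in which `D` hits a slot `t` agree on both sides; the others are `n - 2` applications of
`⁅·, t⁆` to `⁅D a, b⁆ + ⁅a, D b⁆ = c * b + a * D b` and to `⁅D x, y⁆ + ⁅x, D y⁆ = D (a * b)` (as
`D e₁` is central). Both lie in `R₁₂(e)`, so they are fixed, and hence equal.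
-/

section Peirce

variable {R : Type*} [NonUnitalNonAssocRing R]

theorem IsAlt.associator_swap_left_s14 (h : IsAlt R) (x y z : R) :
    associator x y z = -associator y x z := by
  have hxy := (h (x + y) z).1
  have hx := (h x z).1
  have hy := (h y z).1
  simp only [associator_apply, add_mul, mul_add] at hxy ⊢
  linear_combination (norm := abel) hxy - hx - hy

theorem IsAlt.associator_swap_right_s14 (h : IsAlt R) (x y z : R) :
    associator x y z = -associator x z y := by
  have hyz := (h (y + z) x).2
  have hy := (h y x).2
  have hz := (h z x).2
  simp only [associator_apply, add_mul, mul_add] at hyz ⊢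
  linear_combination (norm := abel) hyz - hy - hz

theorem IsAlt.mul_mem_P12 (h : IsAlt R) {e a b : R} (ha : a ∈ P11 e) (hb : b ∈ P12 e) :
    a * b ∈ P12 e := by
  obtain ⟨hea, hae⟩ := ha
  obtain ⟨heb, hbe⟩ := hb
  constructor
  · have := h.associator_swap_left_s14 e a b
    simp only [associator_apply, hea, hae, heb] at this
    linear_combination (norm := abel) -this
  · have := h.associator_swap_right_s14 a b e
    simp only [associator_apply, hbe, hae, heb, mul_zero] at this
    linear_combination (norm := abel) this

theorem IsAlt.mul_eq_zero_of_mem_P12_of_mem_P11 (h : IsAlt R) {e a b : R} (hb : b ∈ P12 e)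
    (ha : a ∈ P11 e) : b * a = 0 := by
  obtain ⟨heb, hbe⟩ := hb
  obtain ⟨hea, hae⟩ := ha
  have h₁ := h.associator_swap_right_s14 b a e
  have h₂ := h.associator_swap_left_s14 a b e
  have h₃ := h.associator_swap_right_s14 a b e
  simp only [associator_apply, hbe, hae, hea, heb, zero_mul, mul_zero] at h₁ h₂ h₃
  linear_combination (norm := abel) -h₁ + h₂ - h₃

theorem lie_eq_of_mem_P12 {e x : R} (hx : x ∈ P12 e) : ⁅e, x⁆ = x := by
  rw [Ring.lie_def, hx.1, hx.2, sub_zero]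

theorem lie_of_mem_P11_of_mem_P12 (h : IsAlt R) {e a b : R} (ha : a ∈ P11 e) (hb : b ∈ P12 e) :
    ⁅a, b⁆ = a * b := by
  rw [Ring.lie_def, h.mul_eq_zero_of_mem_P12_of_mem_P11 hb ha, sub_zero]

theorem rctr_lie_eq_zero {z : R} (hz : z ∈ rctr R) (x : R) : ⁅z, x⁆ = 0 :=
  sub_eq_zero.mpr (hz x)

theorem lie_rctr_eq_zero {z : R} (hz : z ∈ rctr R) (x : R) : ⁅x, z⁆ = 0 :=
  sub_eq_zero.mpr (hz x).symm

end Peirce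

section OneSub

variable {R : Type*} [NonAssocRing R]

theorem P21_eq_P12_one_sub (e : R) : P21 e = P12 (1 - e) := by
  ext x
  simp only [P21, P12, Set.mem_ofPred_eq, sub_mul, mul_sub, one_mul, mul_one,
    sub_eq_self, sub_eq_zero, eq_comm (a := x)]

theorem P22_eq_P11_one_sub (e : R) : P22 e = P11 (1 - e) := by
  ext x
  simp only [P22, P11, Set.mem_ofPred_eq, sub_mul, mul_sub, one_mul, mul_one, sub_eq_self]

theorem lie_one_sub_eq_of_mem_P12 {e x : R} (hx : x ∈ P12 e) : ⁅x, 1 - e⁆ = x := by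
  simp [Ring.lie_def, mul_sub, sub_mul, hx.1, hx.2]

end OneSub

section IteratedCommutator

variable {R : Type*} [NonUnitalNonAssocRing R]

def lieRight (t : R) : R →+ R := AddMonoidHom.mulRight t - AddMonoidHom.mulLeft t

@[simp]
theorem lieRight_apply (t z : R) : lieRight t z = ⁅z, t⁆ := rfl

theorem pn_two (v : Fin 2 → R) : pn 2 v = ⁅v 0, v 1⁆ := rfl

theorem pn_add_three (m : ℕ) (v : Fin (m + 3) → R) :
    pn (m + 3) v = ⁅pn (m + 2) (fun i => v i.castSucc), v (Fin.last (m + 2))⁆ := rfl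

theorem pn_congr {m : ℕ} {v w : Fin (m + 2) → R} (h01 : ⁅v 0, v 1⁆ = ⁅w 0, w 1⁆)
    (htail : ∀ i : Fin m, v i.succ.succ = w i.succ.succ) : pn (m + 2) v = pn (m + 2) w := by
  induction m with
  | zero => rwa [pn_two, pn_two]
  | succ k ih =>
    rw [pn_add_three, pn_add_three, ih (w := fun i => w i.castSucc) h01 fun i => by
      simpa using htail i.castSucc]
    congr 1
    exact htail (Fin.last k)

theorem pn_eq_iterate {m : ℕ} {v : Fin (m + 2) → R} {t : R}
    (htail : ∀ i : Fin m, v i.succ.succ = t) :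
    pn (m + 2) v = (lieRight t)^[m] ⁅v 0, v 1⁆ := by
  induction m with
  | zero => exact pn_two v
  | succ k ih =>
    rw [pn_add_three, ih fun i => by simpa using htail i.castSucc, Function.iterate_succ_apply',
      lieRight_apply]
    congr 1
    exact htail (Fin.last k)

theorem pn_cons_cons_const (m : ℕ) (x y t : R) :
    pn (m + 2) (Fin.cons x (Fin.cons y fun _ => t) : Fin (m + 2) → R) =
      (lieRight t)^[m] ⁅x, y⁆ :=
  pn_eq_iterate fun _ => rfl

end IteratedCommutator

section Derivation

variable {R : Type*} [NonUnitalNonAssocRing R]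

theorem IsMultLieNDeriv.iterate_lie_eq {m : ℕ} {D : R → R} (hD : IsMultLieNDeriv (m + 2) D)
    (t : R) {x y x' y' : R} (h : ⁅x, y⁆ = ⁅x', y'⁆) :
    (lieRight t)^[m] (⁅D x, y⁆ + ⁅x, D y⁆) = (lieRight t)^[m] (⁅D x', y'⁆ + ⁅x', D y'⁆) := by
  have hsplit (w : Fin (m + 2) → R) : D (pn (m + 2) w) =
      pn (m + 2) (Function.update w 0 (D (w 0))) + pn (m + 2) (Function.update w 1 (D (w 1)))
        + ∑ i : Fin m, pn (m + 2) (Function.update w i.succ.succ (D (w i.succ.succ))) := by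
    rw [hD w, Fin.sum_univ_succ, Fin.sum_univ_succ, Fin.succ_zero_eq_one, ← add_assoc]
  set v : Fin (m + 2) → R := Fin.cons x (Fin.cons y fun _ => t)
  set v' : Fin (m + 2) → R := Fin.cons x' (Fin.cons y' fun _ => t)
  have hpn : pn (m + 2) v = pn (m + 2) v' := pn_congr (by simpa [v, v']) fun _ => rfl
  have htail : ∑ i : Fin m, pn (m + 2) (Function.update v i.succ.succ (D (v i.succ.succ))) =
      ∑ i : Fin m, pn (m + 2) (Function.update v' i.succ.succ (D (v' i.succ.succ))) :=
    Finset.sum_congr rfl fun i _ => pn_congr (by simpa [v, v', Function.update_apply]) fun j => by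
      simp [v, v', Function.update_apply]
  have key := hsplit v
  rw [hpn, hsplit v', htail, add_left_inj] at key
  simp only [v, v', ← Fin.succ_zero_eq_one, Fin.cons_succ, Fin.cons_zero, Fin.update_cons_zero,
    ← Fin.cons_update, pn_cons_cons_const] at key
  rw [iterate_map_add, iterate_map_add, key]

end Derivation

theorem IsMultLieNDeriv.map_mul_of_mem_P11_of_mem_P12 {R : Type*} [NonAssocRing R]
    (halt : IsAlt R) {m : ℕ} {D : R → R} (hD : IsMultLieNDeriv (m + 2) D)
    {e a b c : R} (ha : a ∈ P11 e) (hb : b ∈ P12 e) (hc : c ∈ P11 e) (hac : D a - c ∈ rctr R)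
    (hDb : D b ∈ P12 e) (hDab : D (a * b) ∈ P12 e)
    {x y : R} (hxy : ⁅x, y⁆ = a * b) (hDxy : ⁅D x, y⁆ + ⁅x, D y⁆ = D (a * b)) :
    D (a * b) = c * b + a * D b := by
  have hDa : ⁅D a, b⁆ = c * b := by
    have := rctr_lie_eq_zero hac b
    rw [Ring.lie_def, sub_mul, mul_sub, halt.mul_eq_zero_of_mem_P12_of_mem_P11 hb hc] at this
    rw [Ring.lie_def]
    linear_combination (norm := abel) this
  have key := hD.iterate_lie_eq (1 - e) ((lie_of_mem_P11_of_mem_P12 halt ha hb).trans hxy.symm)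
  have hfix {z : R} (hz : z ∈ P12 e) : (lieRight (1 - e))^[m] z = z :=
    Function.iterate_fixed (f := lieRight (1 - e)) (lie_one_sub_eq_of_mem_P12 hz) m
  rwa [hDa, lie_of_mem_P11_of_mem_P12 halt ha hDb, hDxy, hfix hDab, iterate_map_add,
    hfix (halt.mul_mem_P12 hc hb), hfix (halt.mul_mem_P12 ha hDb), eq_comm] at key

theorem stmt14_general {R : Type*} [NonAssocRing R] (halt : IsAlt R)
    (e₁ : R)
    (n : ℕ) (hn : 2 ≤ n)
    (D : R → R) (hD : IsMultLieNDeriv n D)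
    (hcc : (∀ a ∈ P12 e₁, D a ∈ P12 e₁) ∧ (∀ a ∈ P21 e₁, D a ∈ P21 e₁))
    (hDe₁ : D e₁ ∈ rctr R)
    :
    (∀ a ∈ P11 e₁, ∀ b ∈ P12 e₁, ∀ c ∈ P11 e₁, D a - c ∈ rctr R →
      D (a * b) = c * b + a * D b) ∧
    (∀ a ∈ P22 e₁, ∀ b ∈ P21 e₁, ∀ c ∈ P22 e₁, D a - c ∈ rctr R →
      D (a * b) = c * b + a * D b) := by
  obtain ⟨m, rfl⟩ : ∃ m, n = m + 2 := ⟨n - 2, by omega⟩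
  obtain ⟨hD12, hD21⟩ := hcc
  refine ⟨fun a ha b hb c hc hac => ?_, fun a ha b hb c hc hac => ?_⟩
  · have hab := halt.mul_mem_P12 ha hb
    refine hD.map_mul_of_mem_P11_of_mem_P12 halt ha hb hc hac (hD12 b hb) (hD12 _ hab)
      (lie_eq_of_mem_P12 hab) ?_
    rw [rctr_lie_eq_zero hDe₁, lie_eq_of_mem_P12 (hD12 _ hab), zero_add]
  · rw [P22_eq_P11_one_sub] at ha hc
    rw [P21_eq_P12_one_sub] at hb hD21
    have hab := halt.mul_mem_P12 ha hb
    refine hD.map_mul_of_mem_P11_of_mem_P12 halt ha hb hc hac (hD21 b hb) (hD21 _ hab)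
      (y := e₁) (by simpa using lie_one_sub_eq_of_mem_P12 hab) ?_
    rw [lie_rctr_eq_zero hDe₁, add_zero]
    simpa using lie_one_sub_eq_of_mem_P12 (hD21 _ hab)

theorem stmt14 {R : Type*} [NonAssocRing R] (halt : IsAlt R)
    (e₁ e₂ : R) (he₂ : e₂ = 1 - e₁)
    (he : e₁ * e₁ = e₁) (hne0 : e₁ ≠ 0) (hne1 : e₁ ≠ 1)
    (n : ℕ) (hn : 2 ≤ n)
    (htor : ∀ k ∈ ({2, 3, n - 1, n - 3} : Set ℕ), 1 ≤ k → ∀ x : R, k • x = 0 → x = 0)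
    (hc1 : (∀ x ∈ P12 e₁, (∀ y ∈ P21 e₁, x * y = 0) → x = 0) ∧
           (∀ x ∈ P21 e₁, (∀ y ∈ P12 e₁, x * y = 0) → x = 0))
    (hc2 : (∀ x ∈ P11 e₁, (∀ y ∈ P12 e₁, x * y = 0) → x = 0) ∧
           (∀ x ∈ P11 e₁, (∀ y ∈ P21 e₁, y * x = 0) → x = 0))
    (hc3 : (∀ x ∈ P22 e₁, (∀ y ∈ P12 e₁, y * x = 0) → x = 0) ∧
           (∀ x ∈ P22 e₁, (∀ y ∈ P21 e₁, x * y = 0) → x = 0))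
    (hc4 : ∀ z ∈ rctr R, z ≠ 0 → ∀ r : R, ∃ s : R, z * s = r)
    (D : R → R) (hD : IsMultLieNDeriv n D)
    (ha : ∀ a ∈ P11 e₁, ∃ z ∈ rctr R, (e₂ * D a) * e₂ = z * e₂)
    (hb : ∀ a ∈ P22 e₁, ∃ z ∈ rctr R, (e₁ * D a) * e₁ = z * e₁)
    (hcc : (∀ a ∈ P12 e₁, D a ∈ P12 e₁) ∧ (∀ a ∈ P21 e₁, D a ∈ P21 e₁))
    (hDe₁ : D e₁ ∈ rctr R)
    :
    (∀ a ∈ P11 e₁, ∀ b ∈ P12 e₁, ∀ c ∈ P11 e₁, D a - c ∈ rctr R →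
      D (a * b) = c * b + a * D b) ∧
    (∀ a ∈ P22 e₁, ∀ b ∈ P21 e₁, ∀ c ∈ P22 e₁, D a - c ∈ rctr R →
      D (a * b) = c * b + a * D b) :=
  stmt14_general halt e₁ n hn D hD hcc hDe₁
end

section
/- Let R be a unital alternative ring with nontrivial idempotent e₁ and e₂ = 1 − e₁, k-torsion free for every k ∈ {2, 3, n−1, n−3} with k ≥ 1, satisfying conditions (1), (2), (3) and (4), and let D : R → R be a multiplicative Lie n-derivation (n ≥ 2) satisfying conditions (a), (b), (c) and with D(e₁) ∈ Z(R). Then for i ≠ j in {1,2}, for all a ∈ R_ij, b ∈ R_jj and any c ∈ R_jj with D(b) − c ∈ Z(R), one has D(a*b) = D(a)*b + a*c. -/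
/-! Realise `a ∈ R₁₂` (resp. `R₂₁`) as an iterated commutator `p_{n-1}` whose other entries are
`e₁`: since `[a, e₁] = ∓a` and `D e₁` is central, the derivation identity of `p_{n-1}` at that
tuple produces exactly `D a`. Feeding `b` as the last entry of `p_n` then gives
`D [a, b] = [D a, b] + [a, D b]`. In an alternative ring without 2-torsion `R_jj R_ij = 0`, so
`[a, b] = a b`, `[D a, b] = D a · b`, and `[a, D b] = a c` because `D b - c` is central. -/

section Peirce

variable {R : Type*} [NonUnitalNonAssocRing R]

theorem IsAlt.linearize_left (halt : IsAlt R) (x y z : R) :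
    (x * y) * z + (y * x) * z = x * (y * z) + y * (x * z) := by
  have key : ((x * y) * z + (y * x) * z) - (x * (y * z) + y * (x * z))
      = (((x + y) * (x + y)) * z - (x + y) * ((x + y) * z))
        - ((x * x) * z - x * (x * z)) - ((y * y) * z - y * (y * z)) := by
    simp only [add_mul, mul_add]
    abel
  rw [(halt (x + y) z).1, (halt x z).1, (halt y z).1] at key
  simpa only [sub_self, sub_zero, sub_eq_zero] using key

theorem IsAlt.mul_eq_zero_of_mem_P22_of_mem_P12 (halt : IsAlt R)
    (h2 : ∀ x : R, 2 • x = 0 → x = 0) {e b a : R} (he : e * e = e)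
    (hb : b ∈ P22 e) (ha : a ∈ P12 e) : b * a = 0 := by
  have hlin := halt.linearize_left e b a
  rw [hb.1, hb.2, ha.1, zero_mul, zero_add] at hlin
  have hneg : e * (b * a) = -(b * a) := eq_neg_of_add_eq_zero_left hlin.symm
  have halt_e := (halt e (b * a)).1
  rw [he, hneg, mul_neg, hneg, neg_neg] at halt_e
  refine h2 _ ?_
  rw [two_nsmul]
  nth_rw 1 [← halt_e]
  exact neg_add_cancel _

theorem IsAlt.mul_eq_zero_of_mem_P11_of_mem_P21 (halt : IsAlt R)
    (h2 : ∀ x : R, 2 • x = 0 → x = 0) {e b a : R} (he : e * e = e)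
    (hb : b ∈ P11 e) (ha : a ∈ P21 e) : b * a = 0 := by
  have hlin := halt.linearize_left e b a
  rw [hb.1, hb.2, ha.1, mul_zero, add_zero] at hlin
  have halt_e := (halt e (b * a)).1
  rw [he, ← hlin, mul_add, ← hlin] at halt_e
  exact h2 _ (by rw [two_nsmul]; exact left_eq_add.mp halt_e)

theorem neg_mem_P12 {e a : R} (ha : a ∈ P12 e) : -a ∈ P12 e :=
  ⟨by rw [mul_neg, ha.1], by rw [neg_mul, ha.2, neg_zero]⟩

theorem mul_sub_mul_eq_of_mem_P12 {e a : R} (ha : a ∈ P12 e) : a * e - e * a = -a := by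
  rw [ha.1, ha.2, zero_sub]

theorem mul_sub_mul_eq_of_mem_P21 {e a : R} (ha : a ∈ P21 e) : a * e - e * a = a := by
  rw [ha.1, ha.2, sub_zero]

end Peirce

section LieExpansion

variable {R : Type*} [NonUnitalNonAssocRing R]

theorem pn_snoc (k : ℕ) (y : Fin (k + 1) → R) (u : R) :
    pn (k + 2) (Fin.snoc y u) = pn (k + 1) y * u - u * pn (k + 1) y := by
  rw [pn]
  simp only [Fin.snoc_castSucc, Fin.snoc_last]

/-- `a = p_k(y)` for a tuple `y` at which the Lie `k`-derivation identity would give `D a = d`. -/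
def HasLieExpansion (D : R → R) (k : ℕ) (a d : R) : Prop :=
  ∃ y : Fin k → R, pn k y = a ∧ ∑ i, pn k (Function.update y i (D (y i))) = d

theorem hasLieExpansion_one (D : R → R) (a : R) : HasLieExpansion D 1 a (D a) :=
  ⟨fun _ => a, rfl, by simp [pn]⟩

variable {D : R → R} {k : ℕ} {a d : R}

theorem HasLieExpansion.lie (h : HasLieExpansion D (k + 1) a d) (u : R) :
    HasLieExpansion D (k + 2) (a * u - u * a) (d * u - u * d + (a * D u - D u * a)) := by
  obtain ⟨y, rfl, rfl⟩ := h
  refine ⟨Fin.snoc y u, pn_snoc k y u, ?_⟩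
  rw [Fin.sum_univ_castSucc]
  simp only [Fin.snoc_castSucc, Fin.snoc_last, ← Fin.snoc_update,
    Fin.update_snoc_last, pn_snoc]
  rw [Finset.sum_mul, Finset.mul_sum, Finset.sum_sub_distrib]

theorem HasLieExpansion.lie_of_mem_rctr (h : HasLieExpansion D (k + 1) a d) {u : R}
    (hu : D u ∈ rctr R) : HasLieExpansion D (k + 2) (a * u - u * a) (d * u - u * d) := by
  simpa only [hu a, sub_self, add_zero] using h.lie u

theorem IsMultLieNDeriv.map_eq_of_hasLieExpansion (hD : IsMultLieNDeriv k D)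
    (h : HasLieExpansion D k a d) : D a = d := by
  obtain ⟨y, rfl, rfl⟩ := h
  exact hD y

theorem IsMultLieNDeriv.map_mul_of_hasLieExpansion (hD : IsMultLieNDeriv (k + 2) D)
    (ha : HasLieExpansion D (k + 1) a (D a)) {b c : R} (hba : b * a = 0)
    (hbDa : b * D a = 0) (hca : c * a = 0) (hc : D b - c ∈ rctr R) :
    D (a * b) = D a * b + a * c := by
  have hlie := hD.map_eq_of_hasLieExpansion (ha.lie b)
  rw [hba, sub_zero, hbDa, sub_zero] at hlie
  have hcomm : D b * a = a * D b - a * c := by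
    have := hc a
    rwa [sub_mul, mul_sub, hca, sub_zero] at this
  rw [hlie, hcomm, sub_sub_cancel]

theorem hasLieExpansion_of_mem_P21 {e : R} (hDe : D e ∈ rctr R) (ha : a ∈ P21 e)
    (hDa : D a ∈ P21 e) : ∀ k, HasLieExpansion D (k + 1) a (D a)
  | 0 => hasLieExpansion_one D a
  | k + 1 => by
    simpa only [mul_sub_mul_eq_of_mem_P21 ha, mul_sub_mul_eq_of_mem_P21 hDa] using
      (hasLieExpansion_of_mem_P21 hDe ha hDa k).lie_of_mem_rctr hDe

theorem hasLieExpansion_of_mem_P12 {e : R} (hDe : D e ∈ rctr R) (ha : a ∈ P12 e)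
    (hDa : D a ∈ P12 e) : ∀ k, HasLieExpansion D (k + 1) a (D a)
  | 0 => hasLieExpansion_one D a
  | 1 => by
    -- `[e, a] = a`, whereas appending `e` flips the sign; this base case covers odd lengths.
    have h := (hasLieExpansion_one D e).lie a
    simpa only [ha.1, ha.2, hDa.1, hDa.2, hDe a, sub_self, sub_zero, zero_add] using h
  | k + 2 => by
    have h := (hasLieExpansion_of_mem_P12 hDe ha hDa k).lie_of_mem_rctr hDe
    rw [mul_sub_mul_eq_of_mem_P12 ha, mul_sub_mul_eq_of_mem_P12 hDa] at h
    have h' := h.lie_of_mem_rctr hDe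
    rwa [mul_sub_mul_eq_of_mem_P12 (neg_mem_P12 ha), mul_sub_mul_eq_of_mem_P12 (neg_mem_P12 hDa),
      neg_neg, neg_neg] at h'

end LieExpansion

theorem stmt15_general {R : Type*} [NonAssocRing R] (halt : IsAlt R)
    (e₁ : R) (he : e₁ * e₁ = e₁)
    (n : ℕ) (hn : 2 ≤ n)
    (htor : ∀ k ∈ ({2, 3, n - 1, n - 3} : Set ℕ), 1 ≤ k → ∀ x : R, k • x = 0 → x = 0)
    (D : R → R) (hD : IsMultLieNDeriv n D)
    (hcc : (∀ a ∈ P12 e₁, D a ∈ P12 e₁) ∧ (∀ a ∈ P21 e₁, D a ∈ P21 e₁))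
    (hDe₁ : D e₁ ∈ rctr R)
    :
    (∀ a ∈ P12 e₁, ∀ b ∈ P22 e₁, ∀ c ∈ P22 e₁, D b - c ∈ rctr R →
      D (a * b) = D a * b + a * c) ∧
    (∀ a ∈ P21 e₁, ∀ b ∈ P11 e₁, ∀ c ∈ P11 e₁, D b - c ∈ rctr R →
      D (a * b) = D a * b + a * c) := by
  obtain ⟨k, rfl⟩ : ∃ k, n = k + 2 := ⟨n - 2, by omega⟩
  have h2 : ∀ x : R, 2 • x = 0 → x = 0 := htor 2 (Set.mem_insert _ _) (by norm_num)
  constructor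
  · intro a ha b hb c hc hbc
    have hDa := hcc.1 a ha
    exact hD.map_mul_of_hasLieExpansion (hasLieExpansion_of_mem_P12 hDe₁ ha hDa k)
      (halt.mul_eq_zero_of_mem_P22_of_mem_P12 h2 he hb ha)
      (halt.mul_eq_zero_of_mem_P22_of_mem_P12 h2 he hb hDa)
      (halt.mul_eq_zero_of_mem_P22_of_mem_P12 h2 he hc ha) hbc
  · intro a ha b hb c hc hbc
    have hDa := hcc.2 a ha
    exact hD.map_mul_of_hasLieExpansion (hasLieExpansion_of_mem_P21 hDe₁ ha hDa k)
      (halt.mul_eq_zero_of_mem_P11_of_mem_P21 h2 he hb ha)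
      (halt.mul_eq_zero_of_mem_P11_of_mem_P21 h2 he hb hDa)
      (halt.mul_eq_zero_of_mem_P11_of_mem_P21 h2 he hc ha) hbc

theorem stmt15 {R : Type*} [NonAssocRing R] (halt : IsAlt R)
    (e₁ e₂ : R) (he₂ : e₂ = 1 - e₁)
    (he : e₁ * e₁ = e₁) (hne0 : e₁ ≠ 0) (hne1 : e₁ ≠ 1)
    (n : ℕ) (hn : 2 ≤ n)
    (htor : ∀ k ∈ ({2, 3, n - 1, n - 3} : Set ℕ), 1 ≤ k → ∀ x : R, k • x = 0 → x = 0)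
    (hc1 : (∀ x ∈ P12 e₁, (∀ y ∈ P21 e₁, x * y = 0) → x = 0) ∧
           (∀ x ∈ P21 e₁, (∀ y ∈ P12 e₁, x * y = 0) → x = 0))
    (hc2 : (∀ x ∈ P11 e₁, (∀ y ∈ P12 e₁, x * y = 0) → x = 0) ∧
           (∀ x ∈ P11 e₁, (∀ y ∈ P21 e₁, y * x = 0) → x = 0))
    (hc3 : (∀ x ∈ P22 e₁, (∀ y ∈ P12 e₁, y * x = 0) → x = 0) ∧
           (∀ x ∈ P22 e₁, (∀ y ∈ P21 e₁, x * y = 0) → x = 0))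
    (hc4 : ∀ z ∈ rctr R, z ≠ 0 → ∀ r : R, ∃ s : R, z * s = r)
    (D : R → R) (hD : IsMultLieNDeriv n D)
    (ha : ∀ a ∈ P11 e₁, ∃ z ∈ rctr R, (e₂ * D a) * e₂ = z * e₂)
    (hb : ∀ a ∈ P22 e₁, ∃ z ∈ rctr R, (e₁ * D a) * e₁ = z * e₁)
    (hcc : (∀ a ∈ P12 e₁, D a ∈ P12 e₁) ∧ (∀ a ∈ P21 e₁, D a ∈ P21 e₁))
    (hDe₁ : D e₁ ∈ rctr R)
    :
    (∀ a ∈ P12 e₁, ∀ b ∈ P22 e₁, ∀ c ∈ P22 e₁, D b - c ∈ rctr R →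
      D (a * b) = D a * b + a * c) ∧
    (∀ a ∈ P21 e₁, ∀ b ∈ P11 e₁, ∀ c ∈ P11 e₁, D b - c ∈ rctr R →
      D (a * b) = D a * b + a * c) :=
  stmt15_general halt e₁ he n hn htor D hD hcc hDe₁
end
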